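/- Let X be a compact metric space, B ⊆ X closed and C ⊆ X with B ∪ C = X. Suppose F' is a finite family of continuous maps X → B constant on C with F'(X) = B and each map having Lipschitz constant < 1 on B, and P' is a finite family of continuous maps X → C constant on C with P'(X) = C. Then (X, F' ∪ P') is a topological fractal. -/

import Mathlib

/-!
Fix a Lebesgue number `δ` of the cover and a common modulus `ε` of uniform continuity for the
finitely many maps. In a word `f w` of length `n + 2`, either `w` contains a letter of `P`, and
then `w` is that letter (landing in `C`) followed by at least one map constant on `C`, so the
word is constant; or `w` consists of maps of `F` only, which send `X` into `B` and then contract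
`B` by a common factor `K < 1`, so `w` has image of diameter at most `K ^ n * diam X < ε` and
`f w` has image of diameter less than `δ`.
-/

open Set

/-- Composition of a list of self-maps. -/
def Comp {X : Type*} (l : List (X → X)) : X → X := l.foldr (· ∘ ·) id

/-- `F` is a topologically contracting system on `Y ⊆ X`. -/
def TopContracting {X : Type*} [TopologicalSpace X] (F : Set (X → X)) (Y : Set X) : Prop :=
  ∀ 𝒰 : Set (Set X), (∀ U ∈ 𝒰, IsOpen U) → Y ⊆ ⋃₀ 𝒰 →
    ∃ n : ℕ, ∀ l : List (X → X), l.length = n → (∀ f ∈ l, f ∈ F) →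
      ∃ U ∈ 𝒰, Comp l '' Y ⊆ U

/-- `(X, F)` is a topological fractal (whole-space version). -/
def TopFractal {X : Type*} [TopologicalSpace X] (F : Set (X → X)) : Prop :=
  F.Finite ∧ (∀ f ∈ F, Continuous f) ∧ (⋃ f ∈ F, Set.range f) = Set.univ ∧
    TopContracting F Set.univ

open scoped NNReal

section Comp

variable {X : Type*}

@[simp]
lemma Comp_nil : Comp ([] : List (X → X)) = id := rfl

@[simp]
lemma Comp_cons (f : X → X) (l : List (X → X)) : Comp (f :: l) = f ∘ Comp l := rfl

@[simp]
lemma Comp_append (l₁ l₂ : List (X → X)) : Comp (l₁ ++ l₂) = Comp l₁ ∘ Comp l₂ := by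
  induction l₁ with
  | nil => rfl
  | cons f l ih => rw [List.cons_append, Comp_cons, Comp_cons, ih]; rfl

lemma exists_forall_Comp_eq_of_ne_nil {C : Set X} {l : List (X → X)} (hl : l ≠ [])
    (hconst : ∀ g ∈ l, ∃ c, ∀ x ∈ C, g x = c) : ∃ c, ∀ x ∈ C, Comp l x = c := by
  obtain ⟨l', g, rfl⟩ := (List.eq_nil_or_concat' l).resolve_left hl
  obtain ⟨c, hc⟩ := hconst g (by simp)
  exact ⟨Comp l' c, fun x hx => by simp [hc x hx]⟩

lemma range_Comp_append_cons_subsingleton {C : Set X} {l₁ l₂ : List (X → X)} {q : X → X}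
    (hl₁ : l₁ ≠ []) (hconst : ∀ g ∈ l₁, ∃ c, ∀ x ∈ C, g x = c) (hq : range q ⊆ C) :
    (range (Comp (l₁ ++ q :: l₂))).Subsingleton := by
  obtain ⟨c, hc⟩ := exists_forall_Comp_eq_of_ne_nil hl₁ hconst
  rintro _ ⟨x, rfl⟩ _ ⟨y, rfl⟩
  simp [hc _ (hq (mem_range_self _))]

lemma lipschitzOnWith_Comp [PseudoEMetricSpace X] {F : Set (X → X)} {B : Set X} {K : ℝ≥0}
    (hF : ∀ g ∈ F, MapsTo g B B ∧ LipschitzOnWith K g B) {l : List (X → X)}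
    (hl : ∀ g ∈ l, g ∈ F) : MapsTo (Comp l) B B ∧ LipschitzOnWith (K ^ l.length) (Comp l) B := by
  induction l with
  | nil => exact ⟨mapsTo_id B, by simpa using LipschitzWith.id.lipschitzOnWith⟩
  | cons g l ih =>
    obtain ⟨hmaps, hlip⟩ := ih fun h hh => hl h (List.mem_cons_of_mem g hh)
    obtain ⟨hgmaps, hglip⟩ := hF g (hl g List.mem_cons_self)
    refine ⟨hgmaps.comp hmaps, ?_⟩
    simpa [pow_succ'] using hglip.comp hlip hmaps

lemma dist_Comp_append_singleton_le [PseudoMetricSpace X] {F : Set (X → X)} {B : Set X}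
    {K : ℝ≥0} (hFB : ∀ g ∈ F, range g ⊆ B) (hlip : ∀ g ∈ F, LipschitzOnWith K g B)
    {l : List (X → X)} (hl : ∀ h ∈ l, h ∈ F) {g : X → X} (hg : range g ⊆ B) (x y : X) :
    dist (Comp (l ++ [g]) x) (Comp (l ++ [g]) y) ≤ K ^ l.length * dist (g x) (g y) := by
  have hlipl := (lipschitzOnWith_Comp
    (fun h hh => ⟨fun x _ => hFB h hh (mem_range_self x), hlip h hh⟩) hl).2
  simpa using hlipl.dist_le_mul _ (hg (mem_range_self x)) _ (hg (mem_range_self y))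

end Comp

lemma Set.Finite.exists_lt_one_forall_lipschitzOnWith {X Y : Type*} [PseudoEMetricSpace X]
    [PseudoEMetricSpace Y] {F : Set (X → Y)} (hF : F.Finite) {s : Set X}
    (h : ∀ f ∈ F, ∃ K < 1, LipschitzOnWith K f s) : ∃ K < 1, ∀ f ∈ F, LipschitzOnWith K f s := by
  choose! K hK1 hK using h
  exact ⟨hF.toFinset.sup K,
    (Finset.sup_lt_iff zero_lt_one).2 fun f hf => hK1 f (hF.mem_toFinset.1 hf),
    fun f hf => (hK f hf).weaken (Finset.le_sup (hF.mem_toFinset.2 hf))⟩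

lemma Set.Finite.uniformEquicontinuous_of_continuous {X Y : Type*} [PseudoMetricSpace X]
    [CompactSpace X] [PseudoMetricSpace Y] {F : Set (X → Y)} (hF : F.Finite)
    (hcont : ∀ f ∈ F, Continuous f) : UniformEquicontinuous ((↑) : F → X → Y) :=
  have : Finite F := hF
  uniformEquicontinuous_finite.2 fun f => CompactSpace.uniformContinuous_of_continuous (hcont f f.2)

lemma topContracting_univ_of_forall_range_subset_ball {X : Type*} [PseudoMetricSpace X]
    [CompactSpace X] {F : Set (X → X)}
    (h : ∀ δ > 0, ∃ n, ∀ l : List (X → X), l.length = n → (∀ f ∈ l, f ∈ F) →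
      ∃ z, range (Comp l) ⊆ Metric.ball z δ) :
    TopContracting F univ := by
  intro 𝒰 hopen hcover
  obtain ⟨δ, hδ, hball⟩ := lebesgue_number_lemma_of_metric_sUnion isCompact_univ hopen hcover
  obtain ⟨n, hn⟩ := h δ hδ
  refine ⟨n, fun l hlen hl => ?_⟩
  obtain ⟨z, hz⟩ := hn l hlen hl
  obtain ⟨U, hU, hzU⟩ := hball z (mem_univ z)
  exact ⟨U, hU, image_univ ▸ hz.trans hzU⟩

theorem topContracting_union_of_lipschitzOnWith {X : Type*} [PseudoMetricSpace X]
    [CompactSpace X] {B C : Set X} {F P : Set (X → X)} {K : ℝ≥0} (hK : K < 1)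
    (hfin : (F ∪ P).Finite) (hcont : ∀ f ∈ F ∪ P, Continuous f)
    (hconst : ∀ f ∈ F ∪ P, ∃ c, ∀ x ∈ C, f x = c)
    (hFB : ∀ g ∈ F, range g ⊆ B) (hlip : ∀ g ∈ F, LipschitzOnWith K g B)
    (hPC : ∀ q ∈ P, range q ⊆ C) :
    TopContracting (F ∪ P) univ := by
  refine topContracting_univ_of_forall_range_subset_ball fun δ hδ => ?_
  obtain ⟨ε, hε, hmod⟩ :=
    Metric.uniformEquicontinuous_iff.1 (hfin.uniformEquicontinuous_of_continuous hcont) δ hδ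
  obtain ⟨D, hD⟩ := Metric.isBounded_iff.1 (isCompact_univ (X := X)).isBounded
  obtain ⟨n, hn⟩ : ∃ n : ℕ, (K : ℝ) ^ n * D < ε :=
    (((tendsto_pow_atTop_nhds_zero_of_lt_one K.2 hK).mul_const D).eventually
      (gt_mem_nhds (by simpa using hε))).exists
  refine ⟨n + 2, fun l hlen hl => ?_⟩
  obtain ⟨f, m, rfl⟩ := List.exists_cons_of_length_eq_add_one hlen
  have hm : m.length = n + 1 := by simpa using hlen
  obtain ⟨x₀, -⟩ := hconst f (hl f List.mem_cons_self)
  by_cases hmF : ∀ g ∈ m, g ∈ F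
  · obtain ⟨m', g, rfl⟩ := (List.eq_nil_or_concat' m).resolve_left (by rintro rfl; simp at hm)
    have hm' : m'.length = n := by simpa using hm
    refine ⟨f (Comp (m' ++ [g]) x₀), ?_⟩
    rintro _ ⟨x, rfl⟩
    refine hmod _ _ ?_ ⟨f, hl f List.mem_cons_self⟩
    calc dist (Comp (m' ++ [g]) x) (Comp (m' ++ [g]) x₀)
        ≤ K ^ n * dist (g x) (g x₀) := hm' ▸ dist_Comp_append_singleton_le hFB hlip
          (fun h hh => hmF h (List.mem_append_left _ hh)) (hFB g (hmF g (by simp))) x x₀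
      _ ≤ K ^ n * D := by gcongr; exact hD trivial trivial
      _ < ε := hn
  · push Not at hmF
    obtain ⟨q, hqm, hqF⟩ := hmF
    have hqP : q ∈ P := (hl q (List.mem_cons_of_mem f hqm)).resolve_left hqF
    obtain ⟨m₁, m₂, rfl⟩ := List.append_of_mem hqm
    have hS := range_Comp_append_cons_subsingleton (l₁ := f :: m₁) (l₂ := m₂) (C := C)
      (List.cons_ne_nil f m₁) (fun g hg => hconst g (hl g (List.mem_append_left _ hg)))
      (hPC q hqP)
    refine ⟨Comp (f :: m₁ ++ q :: m₂) x₀, fun y hy => ?_⟩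
    rw [hS hy (mem_range_self x₀)]
    exact Metric.mem_ball_self hδ

theorem stmt17_general {X : Type*} [MetricSpace X] [CompactSpace X]
    (B C : Set X) (hBC : B ∪ C = Set.univ)
    (F' P' : Set (X → X)) (hF'fin : F'.Finite) (hP'fin : P'.Finite)
    (hF' : ∀ g ∈ F', Continuous g ∧ Set.range g ⊆ B ∧
        (∃ c : X, ∀ x ∈ C, g x = c) ∧ ∃ K : NNReal, K < 1 ∧ LipschitzOnWith K g B)
    (hF'B : (⋃ g ∈ F', Set.range g) = B)
    (hP' : ∀ q ∈ P', Continuous q ∧ Set.range q ⊆ C ∧ ∃ c : X, ∀ x ∈ C, q x = c)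
    (hP'C : (⋃ q ∈ P', Set.range q) = C) :
    TopFractal (F' ∪ P') := by
  have hfin := hF'fin.union hP'fin
  have hcont : ∀ f ∈ F' ∪ P', Continuous f := by
    rintro f (hf | hf)
    exacts [(hF' f hf).1, (hP' f hf).1]
  have hconst : ∀ f ∈ F' ∪ P', ∃ c, ∀ x ∈ C, f x = c := by
    rintro f (hf | hf)
    exacts [(hF' f hf).2.2.1, (hP' f hf).2.2]
  obtain ⟨K, hK, hlip⟩ :=
    hF'fin.exists_lt_one_forall_lipschitzOnWith fun g hg => (hF' g hg).2.2.2
  refine ⟨hfin, hcont, by rw [biUnion_union, hF'B, hP'C, hBC], ?_⟩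
  exact topContracting_union_of_lipschitzOnWith hK hfin hcont hconst
    (fun g hg => (hF' g hg).2.1) hlip fun q hq => (hP' q hq).2.1

theorem stmt17 {X : Type*} [MetricSpace X] [CompactSpace X]
    (B C : Set X) (hB : IsClosed B) (hBC : B ∪ C = Set.univ)
    (F' P' : Set (X → X)) (hF'fin : F'.Finite) (hP'fin : P'.Finite)
    (hF' : ∀ g ∈ F', Continuous g ∧ Set.range g ⊆ B ∧
        (∃ c : X, ∀ x ∈ C, g x = c) ∧ ∃ K : NNReal, K < 1 ∧ LipschitzOnWith K g B)
    (hF'B : (⋃ g ∈ F', Set.range g) = B)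
    (hP' : ∀ q ∈ P', Continuous q ∧ Set.range q ⊆ C ∧ ∃ c : X, ∀ x ∈ C, q x = c)
    (hP'C : (⋃ q ∈ P', Set.range q) = C) :
    TopFractal (F' ∪ P') :=
  stmt17_general B C hBC F' P' hF'fin hP'fin hF' hF'B hP' hP'C
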